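/- Let η ∈ L²(ℝ;ℝ) with ⟨η,η⟩ > 0, x ∈ ℝ, and μ the white noise measure. The function F(f) = (2π⟨η,η⟩)^{-1/2} exp(-(i⟨η,f⟩ - x)²/(2⟨η,η⟩) - ½⟨f,f⟩), f ∈ S(ℝ), satisfies: (i) for all f, g ∈ S(ℝ), λ ↦ F(λf + g) extends to an entire function on ℂ; (ii) there exist constants C, D > 0 with |F(zf)| ≤ C exp(D|z|²‖f‖²) for all z ∈ ℂ, f ∈ S(ℝ). -/

import Mathlib

/-!
Along the line `λ ↦ λ f + g` the pairings `⟨η, λ f + g⟩` and `⟨λ f + g, λ f + g⟩` are polynomials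
in `λ` of degree one and two, so `F (λ f + g)` is the exponential of a polynomial in `λ` and
extends to an entire function. For the growth bound, the real part of the exponent of `F (z f)` is
`((re z ⟨η,f⟩)² - (im z ⟨η,f⟩ + x)²) / (2⟨η,η⟩) - re (z²) ⟨f,f⟩ / 2`, and Cauchy–Schwarz,
`⟨η,f⟩² ≤ ⟨η,η⟩ ⟨f,f⟩`, bounds it by `(im z)² ⟨f,f⟩ / 2 ≤ |z|² ‖f‖² / 2`.
-/

open MeasureTheory Real

/-- The `L²`-pairing `⟨η, f⟩ = ∫ η(s) f(s) ds`. -/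
noncomputable def l2Pair (η : ℝ → ℝ) (f : ℝ → ℝ) : ℝ := ∫ s, η s * f s

/-- The T-transform of Donsker's delta `δ₀(⟨η,·⟩ - x)` evaluated at a Schwartz
function `f`. -/
noncomputable def donskerT (η : ℝ → ℝ) (x : ℝ) (f : SchwartzMap ℝ ℝ) : ℂ :=
  (((2 * π * l2Pair η η) ^ (-(1/2 : ℝ)) : ℝ) : ℂ) *
    Complex.exp (-(Complex.I * (l2Pair η (⇑f)) - (x : ℂ))^2 / (2 * (l2Pair η η : ℂ))
      - ((l2Pair (⇑f) (⇑f) : ℝ) : ℂ) / 2)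

/-- The canonical entire extension of `z ↦ donskerT η x (z f)`. -/
noncomputable def donskerTExt (η : ℝ → ℝ) (x : ℝ) (z : ℂ) (f : SchwartzMap ℝ ℝ) : ℂ :=
  (((2 * π * l2Pair η η) ^ (-(1/2 : ℝ)) : ℝ) : ℂ) *
    Complex.exp (-(Complex.I * z * (l2Pair η (⇑f)) - (x : ℂ))^2 / (2 * (l2Pair η η : ℂ))
      - z^2 * ((l2Pair (⇑f) (⇑f) : ℝ) : ℂ) / 2)

section L2Pair

variable {u v w : ℝ → ℝ}

lemma l2Pair_comm (u v : ℝ → ℝ) : l2Pair u v = l2Pair v u := by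
  simp only [l2Pair, mul_comm]

lemma l2Pair_smul_right (u v : ℝ → ℝ) (c : ℝ) : l2Pair u (c • v) = c * l2Pair u v := by
  simp only [l2Pair, Pi.smul_apply, smul_eq_mul, mul_left_comm _ c, integral_const_mul]

lemma l2Pair_smul_left (u v : ℝ → ℝ) (c : ℝ) : l2Pair (c • u) v = c * l2Pair u v := by
  rw [l2Pair_comm, l2Pair_smul_right, l2Pair_comm]

lemma l2Pair_add_right (hu : MemLp u 2 volume) (hv : MemLp v 2 volume)
    (hw : MemLp w 2 volume) : l2Pair u (v + w) = l2Pair u v + l2Pair u w := by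
  simp only [l2Pair, Pi.add_apply, mul_add]
  exact integral_add (hu.integrable_mul hv) (hu.integrable_mul hw)

lemma l2Pair_add_left (hu : MemLp u 2 volume) (hv : MemLp v 2 volume)
    (hw : MemLp w 2 volume) : l2Pair (u + v) w = l2Pair u w + l2Pair v w := by
  rw [l2Pair_comm, l2Pair_add_right hw hu hv, l2Pair_comm w, l2Pair_comm w]

lemma l2Pair_self_nonneg (u : ℝ → ℝ) : 0 ≤ l2Pair u u :=
  integral_nonneg fun _ => mul_self_nonneg _

lemma l2Pair_eq_inner (hu : MemLp u 2 volume) (hv : MemLp v 2 volume) :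
    l2Pair u v = inner ℝ (hu.toLp u) (hv.toLp v) := by
  rw [L2.inner_def]
  refine integral_congr_ae ?_
  filter_upwards [hu.coeFn_toLp, hv.coeFn_toLp] with s hus hvs
  simp [hus, hvs, mul_comm]

lemma l2Pair_sq_le (hu : MemLp u 2 volume) (hv : MemLp v 2 volume) :
    l2Pair u v ^ 2 ≤ l2Pair u u * l2Pair v v := by
  rw [l2Pair_eq_inner hu hv, l2Pair_eq_inner hu hu, l2Pair_eq_inner hv hv, sq]
  exact real_inner_mul_inner_self_le _ _

lemma l2Pair_smul_add_self (hv : MemLp v 2 volume) (hw : MemLp w 2 volume) (c : ℝ) :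
    l2Pair (c • v + w) (c • v + w) = c ^ 2 * l2Pair v v + 2 * c * l2Pair v w + l2Pair w w := by
  have hcv : MemLp (c • v) 2 volume := hv.const_smul c
  rw [l2Pair_add_left hcv hw (hcv.add hw), l2Pair_add_right hcv hcv hw,
    l2Pair_add_right hw hcv hw, l2Pair_smul_left, l2Pair_smul_left, l2Pair_smul_right,
    l2Pair_smul_right, l2Pair_comm w v]
  ring

end L2Pair

lemma SchwartzMap.coe_smul_add {E F : Type*} [NormedAddCommGroup E] [NormedSpace ℝ E]
    [NormedAddCommGroup F] [NormedSpace ℝ F] (f g : SchwartzMap E F) (c : ℝ) :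
    ⇑(c • f + g) = c • ⇑f + ⇑g :=
  rfl

noncomputable def donskerProfile (t x : ℝ) (A B : ℂ) : ℂ :=
  (((2 * π * t) ^ (-(1/2 : ℝ)) : ℝ) : ℂ) *
    Complex.exp (-(Complex.I * A - (x : ℂ)) ^ 2 / (2 * (t : ℂ)) - B / 2)

lemma donskerT_eq_donskerProfile (η : ℝ → ℝ) (x : ℝ) (f : SchwartzMap ℝ ℝ) :
    donskerT η x f = donskerProfile (l2Pair η η) x (l2Pair η f) (l2Pair f f) := rfl

lemma re_donskerTExt_exponent_le (z : ℂ) {t a p x : ℝ} (ht : 0 < t) (hcs : a ^ 2 ≤ t * p) :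
    (-(Complex.I * z * a - x) ^ 2 / (2 * (t : ℂ)) - z ^ 2 * (p : ℂ) / 2).re ≤ z.im ^ 2 * p / 2 := by
  have hre : (-(Complex.I * z * a - x) ^ 2 / (2 * (t : ℂ)) - z ^ 2 * (p : ℂ) / 2).re
      = ((z.re * a) ^ 2 - (z.im * a + x) ^ 2) / (2 * t) - (z.re ^ 2 - z.im ^ 2) * p / 2 := by
    rw [show (2 * (t : ℂ)) = ((2 * t : ℝ) : ℂ) by push_cast; ring, Complex.sub_re,
      Complex.div_ofReal_re]
    simp only [sq, Complex.neg_re, Complex.mul_re, Complex.sub_re, Complex.I_re, zero_mul,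
      Complex.I_im, one_mul, zero_sub, Complex.ofReal_re, neg_mul, Complex.mul_im, zero_add,
      Complex.ofReal_im, mul_zero, sub_zero, Complex.sub_im, neg_sub, Complex.div_ofNat_re,
      sub_left_inj]
    ring
  rw [hre]
  have hre_sq : (z.re * a) ^ 2 ≤ z.re ^ 2 * (t * p) := by
    rw [mul_pow]; exact mul_le_mul_of_nonneg_left hcs (sq_nonneg _)
  rw [div_sub' (by positivity), div_le_div_iff₀ (by positivity) two_pos]
  nlinarith [sq_nonneg (z.im * a + x)]

lemma norm_donskerTExt_le {η : ℝ → ℝ} (hη : MemLp η 2 volume) (hpos : 0 < l2Pair η η) (x : ℝ)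
    (z : ℂ) (f : SchwartzMap ℝ ℝ) :
    ‖donskerTExt η x z f‖ ≤
      (2 * π * l2Pair η η) ^ (-(1/2 : ℝ)) * Real.exp (1/2 * ‖z‖ ^ 2 * l2Pair f f) := by
  have hC : 0 < (2 * π * l2Pair η η) ^ (-(1/2 : ℝ)) := rpow_pos_of_pos (by positivity) _
  rw [donskerTExt, norm_mul, Complex.norm_exp, Complex.norm_real, norm_of_nonneg hC.le]
  gcongr
  have him : z.im ^ 2 ≤ ‖z‖ ^ 2 := by
    rw [Complex.sq_norm, Complex.normSq_apply]; nlinarith [mul_self_nonneg z.re]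
  calc _ ≤ z.im ^ 2 * l2Pair f f / 2 :=
        re_donskerTExt_exponent_le z hpos (l2Pair_sq_le hη (f.memLp 2))
    _ ≤ 1/2 * ‖z‖ ^ 2 * l2Pair f f := by
        nlinarith [mul_le_mul_of_nonneg_right him (l2Pair_self_nonneg f)]

/-- For `η ∈ L²(ℝ;ℝ)` with `⟨η,η⟩ > 0` and `x ∈ ℝ`, the function
`F(f) = (2π⟨η,η⟩)^{-1/2} exp(-(i⟨η,f⟩ - x)²/(2⟨η,η⟩) - ½⟨f,f⟩)` on Schwartz
space is a U-functional: (i) for all `f, g`, `λ ↦ F(λ f + g)` extends to an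
entire function on `ℂ`; (ii) there are constants `C, D > 0` with
`|F(z f)| ≤ C exp(D |z|² ‖f‖²)` for all `z ∈ ℂ` and Schwartz `f`. -/
theorem stmt_13 (η : ℝ → ℝ) (hη : MeasureTheory.MemLp η 2 volume)
    (hpos : 0 < l2Pair η η) (x : ℝ) :
    (∀ f g : SchwartzMap ℝ ℝ, ∃ Φ : ℂ → ℂ, Differentiable ℂ Φ ∧
      ∀ lam : ℝ, Φ lam = donskerT η x (lam • f + g)) ∧
    (∃ C D : ℝ, 0 < C ∧ 0 < D ∧ ∀ (z : ℂ) (f : SchwartzMap ℝ ℝ),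
      ‖donskerTExt η x z f‖ ≤ C * Real.exp (D * ‖z‖^2 * l2Pair (⇑f) (⇑f))) := by
  refine ⟨fun f g => ?_, ⟨_, 1/2, rpow_pos_of_pos (by positivity) _, by norm_num,
    norm_donskerTExt_le hη hpos x⟩⟩
  refine ⟨fun z => donskerProfile (l2Pair η η) x (z * l2Pair η f + l2Pair η g)
    (z ^ 2 * l2Pair f f + 2 * z * l2Pair f g + l2Pair g g), by unfold donskerProfile; fun_prop,
    fun lam => ?_⟩
  rw [donskerT_eq_donskerProfile, SchwartzMap.coe_smul_add,
    l2Pair_add_right hη ((f.memLp 2).const_smul lam) (g.memLp 2), l2Pair_smul_right,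
    l2Pair_smul_add_self (f.memLp 2) (g.memLp 2)]
  push_cast
  rfl
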